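/- arXiv:math/9512222 — 3 statements merged into one kernel-verified Lean document; each statement's English description precedes it below -/
import Mathlib

section
/- Let p be a nonzero polynomial of degree ≤ N on K and let φ ∈ L^∞(K) with ‖φ‖_{∞,K} ≤ 1 satisfying ∫_K x^α φ dx = ∫_{K∩{p>0}} x^α dx − ∫_{K∩{p<0}} x^α dx for all |α| ≤ N. Then φ = sgn(p) almost everywhere on K. -/
/-!
Write `s = sgn p`. The moment hypotheses say that `s - φ` is orthogonal on `K` to every monomial
of `p`, hence to `p` itself: `∫_K p (s - φ) = 0`. Since `|φ| ≤ 1`, the integrand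
`p (s - φ) = |p| - p φ` is nonnegative, so it vanishes a.e. on `K`. The zero set of a nonzero
polynomial is Lebesgue-null (induction on the number of variables and Fubini: for a.e. value of
the last `n` coordinates, `p` is a nonzero polynomial in the first one, with finitely many
roots), so `φ = s` a.e. on `K`.
-/

open MeasureTheory

theorem Real.measurable_sign : Measurable Real.sign :=
  Measurable.ite measurableSet_Iio measurable_const
    (Measurable.ite measurableSet_Ioi measurable_const measurable_const)

theorem Real.abs_sign_le_one (r : ℝ) : |Real.sign r| ≤ 1 := by
  rcases Real.sign_apply_eq r with h | h | h <;> simp [h]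

theorem Real.mul_sign_sub_nonneg {a b : ℝ} (hb : |b| ≤ 1) : 0 ≤ a * (Real.sign a - b) := by
  obtain ⟨hb₁, hb₂⟩ := abs_le.mp hb
  rcases lt_trichotomy a 0 with ha | rfl | ha
  · rw [Real.sign_of_neg ha]; nlinarith
  · simp
  · rw [Real.sign_of_pos ha]; nlinarith

section

variable {α : Type*} [MeasurableSpace α] {μ : Measure α}

theorem setIntegral_mul_sign {K : Set α} {f g : α → ℝ} (hf : Measurable f)
    (hg : IntegrableOn g K μ) :
    ∫ x in K, g x * Real.sign (f x) ∂μ =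
      (∫ x in K ∩ {x | 0 < f x}, g x ∂μ) - ∫ x in K ∩ {x | f x < 0}, g x ∂μ := by
  have hpos : MeasurableSet {x | 0 < f x} := measurableSet_lt measurable_const hf
  have hneg : MeasurableSet {x | f x < 0} := measurableSet_lt hf measurable_const
  have hsplit : (fun x => g x * Real.sign (f x)) =
      fun x => {x | 0 < f x}.indicator g x - {x | f x < 0}.indicator g x := by
    ext x
    rcases lt_trichotomy (f x) 0 with h | h | h
    · simp [Real.sign_of_neg h, h, h.not_gt]
    · simp [h]
    · simp [Real.sign_of_pos h, h, h.not_gt]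
  rw [hsplit, integral_sub (hg.indicator hpos) (hg.indicator hneg), integral_indicator hpos,
    integral_indicator hneg, Measure.restrict_restrict hpos, Measure.restrict_restrict hneg,
    Set.inter_comm _ K, Set.inter_comm _ K]

theorem ae_eq_sign_of_integral_mul_sign_sub_eq_zero {f φ : α → ℝ}
    (hf : Integrable f μ) (hf₀ : ∀ᵐ x ∂μ, f x ≠ 0) (hφ : AEStronglyMeasurable φ μ)
    (hφ₁ : ∀ᵐ x ∂μ, |φ x| ≤ 1)
    (h : ∫ x, f x * (Real.sign (f x) - φ x) ∂μ = 0) :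
    ∀ᵐ x ∂μ, φ x = Real.sign (f x) := by
  have hsign : AEStronglyMeasurable (fun x => Real.sign (f x)) μ :=
    (Real.measurable_sign.comp_aemeasurable hf.aemeasurable).aestronglyMeasurable
  have hbound : ∀ᵐ x ∂μ, ‖Real.sign (f x) - φ x‖ ≤ 2 := by
    filter_upwards [hφ₁] with x hx
    calc ‖Real.sign (f x) - φ x‖ ≤ |Real.sign (f x)| + |φ x| := abs_sub _ _
      _ ≤ 1 + 1 := add_le_add (Real.abs_sign_le_one _) hx
      _ = 2 := one_add_one_eq_two
  have hzero := (integral_eq_zero_iff_of_nonneg_ae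
    (hφ₁.mono fun x hx => Real.mul_sign_sub_nonneg hx) (hf.mul_bdd (hsign.sub hφ) hbound)).mp h
  filter_upwards [hzero, hf₀] with x hx hx₀
  have := (mul_eq_zero.mp hx).resolve_left hx₀
  linarith

end

theorem ae_of_ae_ae_cons {α : Type*} [MeasureSpace α] [SigmaFinite (volume : Measure α)]
    {n : ℕ} {P : (Fin (n + 1) → α) → Prop} (hP : MeasurableSet {x | P x})
    (h : ∀ᵐ z : Fin n → α, ∀ᵐ y : α, P (Fin.cons y z)) : ∀ᵐ x : Fin (n + 1) → α, P x := by
  have he := (volume_preserving_piFinSuccAbove (fun _ : Fin (n + 1) => α) 0).symm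
  have he_eq : ⇑(MeasurableEquiv.piFinSuccAbove (fun _ => α) 0).symm =
      fun yz : α × (Fin n → α) => Fin.cons yz.1 yz.2 := by
    ext yz; simp [MeasurableEquiv.piFinSuccAbove]
  have hP' : MeasurableSet {yz : α × (Fin n → α) | P (Fin.cons yz.1 yz.2)} := by
    rw [← Set.preimage_ofPred_eq, ← he_eq]
    exact he.measurable hP
  rw [← he.map_eq, ae_map_iff he.measurable.aemeasurable hP, Measure.volume_eq_prod, he_eq]
  exact (Measure.ae_prod_iff_ae_ae hP').2 ((Measure.ae_ae_comm hP').2 h)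

namespace MvPolynomial

theorem integral_eval_mul {σ : Type*} [Fintype σ] [MeasurableSpace (σ → ℝ)]
    {μ : Measure (σ → ℝ)} (p : MvPolynomial σ ℝ) {g : (σ → ℝ) → ℝ}
    (hg : ∀ d ∈ p.support, Integrable (fun x => (∏ i, x i ^ d i) * g x) μ) :
    ∫ x, eval x p * g x ∂μ =
      ∑ d ∈ p.support, coeff d p * ∫ x, (∏ i, x i ^ d i) * g x ∂μ := by
  simp_rw [eval_eq', Finset.sum_mul, mul_assoc]
  rw [integral_finsetSum _ fun d hd => (hg d hd).const_mul _]
  simp_rw [integral_const_mul]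

theorem ae_eval_ne_zero {n : ℕ} {p : MvPolynomial (Fin n) ℝ} (hp : p ≠ 0) :
    ∀ᵐ x : Fin n → ℝ, eval x p ≠ 0 := by
  induction n with
  | zero =>
    rw [eq_C_of_isEmpty p, Ne, C_eq_zero] at hp
    exact .of_forall fun x => by rwa [eq_C_of_isEmpty p, eval_C]
  | succ n ih =>
    set q := finSuccEquiv ℝ n p
    obtain ⟨k, hk⟩ := Polynomial.nonempty_support_iff.mpr
      ((map_ne_zero_iff _ (finSuccEquiv ℝ n).injective).mpr hp)
    have hslice : ∀ᵐ z : Fin n → ℝ, ∀ᵐ y : ℝ, eval (Fin.cons y z) p ≠ 0 := by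
      filter_upwards [ih (Polynomial.mem_support_iff.mp hk)] with z hz
      have hqz : q.map (eval z) ≠ 0 := fun h => hz <| by
        simpa only [Polynomial.coeff_map, Polynomial.coeff_zero] using congrArg (·.coeff k) h
      simp only [ae_iff, not_not, eval_eq_eval_mv_eval']
      exact (Polynomial.finite_setOfPred_isRoot hqz).measure_zero _
    exact ae_of_ae_ae_cons ((isOpen_ne_fun (continuous_eval p) continuous_const).measurableSet)
      hslice

end MvPolynomial

theorem sign_determined_by_moments_general (n N : ℕ) (K : Set (Fin n → ℝ))
    (hK : IsCompact K)
    (p : MvPolynomial (Fin n) ℝ) (hp : p ≠ 0) (hdeg : p.totalDegree ≤ N)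
    (φ : (Fin n → ℝ) → ℝ) (hφi : IntegrableOn φ K)
    (hφb : ∀ᵐ x ∂(volume.restrict K), |φ x| ≤ 1)
    (hmom : ∀ α : Fin n → ℕ, (∑ i, α i) ≤ N →
      ∫ x in K, (∏ i, x i ^ α i) * φ x =
        (∫ x in K ∩ {x | 0 < MvPolynomial.eval x p}, ∏ i, x i ^ α i) -
        ∫ x in K ∩ {x | MvPolynomial.eval x p < 0}, ∏ i, x i ^ α i) :
    ∀ᵐ x ∂(volume.restrict K),
      φ x = Real.sign (MvPolynomial.eval x p) := by
  have hmono (α : Fin n → ℕ) : IntegrableOn (fun x : Fin n → ℝ => ∏ i, x i ^ α i) K :=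
    (continuous_finsetProd _ fun i _ => (continuous_apply i).pow _).continuousOn
      |>.integrableOn_compact hK
  have hsign (α : Fin n → ℕ) :
      IntegrableOn (fun x => (∏ i, x i ^ α i) * Real.sign (MvPolynomial.eval x p)) K :=
    (hmono α).mul_bdd
      (Real.measurable_sign.comp (MvPolynomial.continuous_eval p).measurable).aestronglyMeasurable
      (.of_forall fun _ => Real.abs_sign_le_one _)
  have hφ (α : Fin n → ℕ) : IntegrableOn (fun x => (∏ i, x i ^ α i) * φ x) K :=
    (hmono α).mul_bdd hφi.aestronglyMeasurable (by simpa only [Real.norm_eq_abs] using hφb)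
  refine ae_eq_sign_of_integral_mul_sign_sub_eq_zero
    ((MvPolynomial.continuous_eval p).continuousOn.integrableOn_compact hK)
    (ae_restrict_of_ae (MvPolynomial.ae_eval_ne_zero hp)) hφi.aestronglyMeasurable hφb ?_
  rw [MvPolynomial.integral_eval_mul p fun d _ =>
    ((hsign d).sub (hφ d)).congr (.of_forall fun _ => (mul_sub ..).symm)]
  refine Finset.sum_eq_zero fun d hd => ?_
  have hdN : ∑ i, d i ≤ N := by
    simpa [Finsupp.sum_fintype] using (MvPolynomial.le_totalDegree hd).trans hdeg
  simp_rw [mul_sub]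
  rw [integral_sub (hsign d) (hφ d),
    setIntegral_mul_sign (MvPolynomial.continuous_eval p).measurable (hmono d), hmom d hdN,
    sub_self, mul_zero]

/-- A function `φ` with `|φ| ≤ 1` a.e. on `K` having the same moments up to degree `N`
as `sgn(p)`, for a nonzero polynomial `p` of degree at most `N`, equals `sgn(p)` a.e. on `K`. -/
theorem sign_determined_by_moments (n N : ℕ) (K : Set (Fin n → ℝ))
    (hK : IsCompact K) (hKint : (interior K).Nonempty)
    (p : MvPolynomial (Fin n) ℝ) (hp : p ≠ 0) (hdeg : p.totalDegree ≤ N)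
    (φ : (Fin n → ℝ) → ℝ) (hφm : Measurable φ) (hφi : IntegrableOn φ K)
    (hφb : ∀ᵐ x ∂(volume.restrict K), |φ x| ≤ 1)
    (hmom : ∀ α : Fin n → ℕ, (∑ i, α i) ≤ N →
      ∫ x in K, (∏ i, x i ^ α i) * φ x =
        (∫ x in K ∩ {x | 0 < MvPolynomial.eval x p}, ∏ i, x i ^ α i) -
        ∫ x in K ∩ {x | MvPolynomial.eval x p < 0}, ∏ i, x i ^ α i) :
    ∀ᵐ x ∂(volume.restrict K),
      φ x = Real.sign (MvPolynomial.eval x p) :=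
  sign_determined_by_moments_general n N K hK p hp hdeg φ hφi hφb hmom
end

section
/- For the open unit disk D ⊆ C, the exponential kernel satisfies E_D(z, w̄) = exp(−(1/π) ∫_D dA(ζ)/((ζ−z)(ζ̄−w̄))) = 1 − 1/(z·w̄) for all z, w with |z| > 1 and |w| > 1. -/
/-!
For `‖ζ‖ < 1 < ‖z‖, ‖w‖` the integrand expands into the absolutely convergent double series
`∑ ζⁿ ζ̄ᵐ / (zⁿ⁺¹ w̄ᵐ⁺¹)`, which may be integrated termwise over the disk. In polar coordinates
`ζⁿ ζ̄ᵐ = rⁿ⁺ᵐ e^{i(n-m)θ}`, so only the diagonal moments survive, `∫_D |ζ|²ⁿ dA = π / (n + 1)`.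
Hence the integral is `π ∑ uⁿ⁺¹ / (n + 1) = -π log (1 - u)` with `u = 1 / (z w̄)`, and
exponentiating gives `1 - u`.
-/

open MeasureTheory Set Complex
open scoped Real ComplexConjugate

theorem hasSum_pow_div_pow_succ {K : Type*} [NormedField K] [CompleteSpace K] {x y : K}
    (h : ‖x‖ < ‖y‖) : HasSum (fun n : ℕ => x ^ n / y ^ (n + 1)) (y - x)⁻¹ := by
  have hy : y ≠ 0 := norm_pos_iff.mp ((norm_nonneg x).trans_lt h)
  have hq : ‖x / y‖ < 1 := by rwa [norm_div, div_lt_one (norm_pos_iff.mpr hy)]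
  convert (hasSum_geometric_of_norm_lt_one hq).div_const y using 1
  · ext n; rw [div_pow, div_div, pow_succ]
  · rw [div_eq_mul_inv, ← mul_inv, sub_mul, one_mul, div_mul_cancel₀ x hy]

theorem summable_norm_pow_div_pow_succ {K : Type*} [NormedField K] {x y : K}
    (h : ‖x‖ < ‖y‖) : Summable fun n : ℕ => ‖x ^ n / y ^ (n + 1)‖ := by
  have h' : ‖‖x‖‖ < ‖‖y‖‖ := by simpa only [norm_norm] using h
  simpa only [norm_div, norm_pow] using (hasSum_pow_div_pow_succ h').summable

theorem hasSum_inv_sub_mul_inv_sub {K : Type*} [NormedField K] [CompleteSpace K] {x y x' y' : K}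
    (h : ‖x‖ < ‖y‖) (h' : ‖x'‖ < ‖y'‖) :
    HasSum (fun p : ℕ × ℕ => x ^ p.1 / y ^ (p.1 + 1) * (x' ^ p.2 / y' ^ (p.2 + 1)))
      ((y - x)⁻¹ * (y' - x')⁻¹) := by
  have hs := summable_norm_pow_div_pow_succ h
  have hs' := summable_norm_pow_div_pow_succ h'
  have := (summable_mul_of_summable_norm hs hs').hasSum
  rwa [← tsum_mul_tsum_of_summable_norm hs hs', (hasSum_pow_div_pow_succ h).tsum_eq,
    (hasSum_pow_div_pow_succ h').tsum_eq] at this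

theorem integral_tsum_of_norm_le {ι α E : Type*} [Countable ι] [MeasurableSpace α]
    [NormedAddCommGroup E] [NormedSpace ℝ E] {μ : Measure α} [IsFiniteMeasure μ]
    {F : ι → α → E} {c : ι → ℝ} (hF : ∀ i, AEStronglyMeasurable (F i) μ)
    (hFc : ∀ i, ∀ᵐ x ∂μ, ‖F i x‖ ≤ c i) (hc : Summable c) :
    ∫ x, ∑' i, F i x ∂μ = ∑' i, ∫ x, F i x ∂μ := by
  have hint i : Integrable (F i) μ := .of_bound (hF i) (c i) (hFc i)
  refine (integral_tsum_of_summable_integral_norm hint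
    ((hc.mul_left (μ.real univ)).of_nonneg_of_le (fun i => integral_nonneg fun _ => norm_nonneg _)
      fun i => ?_)).symm
  calc ∫ x, ‖F i x‖ ∂μ ≤ ∫ _, c i ∂μ := integral_mono_ae (hint i).norm (integrable_const _) (hFc i)
    _ = μ.real univ * c i := by rw [integral_const, smul_eq_mul]

theorem integral_exp_int_mul_mul_I (k : ℤ) :
    ∫ θ in -π..π, exp (k * θ * I) = if k = 0 then (2 * π : ℂ) else 0 := by
  split_ifs with hk
  · simp [hk]; ring
  have hkI : (k : ℂ) * I ≠ 0 := mul_ne_zero (by exact_mod_cast hk) I_ne_zero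
  have hper : exp (k * I * π) = exp (k * I * ↑(-π)) :=
    exp_eq_exp_iff_exists_int.mpr ⟨k, by push_cast; ring⟩
  simp_rw [mul_right_comm _ _ I]
  rw [integral_exp_mul_complex hkI, hper, sub_self, zero_div]

theorem integral_Ioo_ofReal_pow {R : ℝ} (hR : 0 ≤ R) (N : ℕ) :
    ∫ r in Ioo 0 R, (r : ℂ) ^ N = R ^ (N + 1) / (N + 1) := by
  rw [← integral_Ioc_eq_integral_Ioo, ← intervalIntegral.integral_of_le hR]
  simp_rw [← ofReal_pow]
  rw [intervalIntegral.integral_ofReal, integral_pow]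
  push_cast; ring

theorem polarCoord_symm_eq_mul_exp (p : ℝ × ℝ) :
    Complex.polarCoord.symm p = p.1 * exp (p.2 * I) := by
  rw [Complex.polarCoord_symm_apply, exp_mul_I]; push_cast; ring

theorem integral_norm_lt_eq_integral_polarCoord {E : Type*} [NormedAddCommGroup E]
    [NormedSpace ℝ E] (f : ℂ → E) (R : ℝ) :
    ∫ ζ in {ζ : ℂ | ‖ζ‖ < R}, f ζ =
      ∫ p in Ioo 0 R ×ˢ Ioo (-π) π, p.1 • f (Complex.polarCoord.symm p) := by
  have hD : MeasurableSet {ζ : ℂ | ‖ζ‖ < R} := measurableSet_lt measurable_norm measurable_const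
  have hset : polarCoord.target ∩ {p : ℝ × ℝ | p.1 < R} = Ioo 0 R ×ˢ Ioo (-π) π := by
    ext ⟨r, θ⟩
    simp only [polarCoord_target, mem_inter_iff, mem_prod, mem_Ioi, mem_Ioo, mem_ofPred_eq]
    tauto
  rw [← integral_indicator hD, ← Complex.integral_comp_polarCoord_symm, ← hset,
    ← setIntegral_indicator (measurableSet_lt measurable_fst measurable_const)]
  refine setIntegral_congr_fun polarCoord.open_target.measurableSet fun p hp => ?_
  have hr : |p.1| = p.1 := abs_of_pos (mem_Ioi.mp hp.1)
  simp only [indicator, mem_ofPred_eq, Complex.norm_polarCoord_symm, hr]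
  split_ifs <;> simp

theorem integral_norm_lt_pow_mul_conj_pow {R : ℝ} (hR : 0 ≤ R) (n m : ℕ) :
    ∫ ζ in {ζ : ℂ | ‖ζ‖ < R}, ζ ^ n * conj ζ ^ m =
      if n = m then (π : ℂ) * R ^ (2 * n + 2) / (n + 1) else 0 := by
  have hpolar (p : ℝ × ℝ) :
      p.1 • (Complex.polarCoord.symm p ^ n * conj (Complex.polarCoord.symm p) ^ m) =
        (p.1 : ℂ) ^ (n + m + 1) * exp (((n - m : ℤ) : ℂ) * p.2 * I) := by
    have hexp : exp (((n - m : ℤ) : ℂ) * p.2 * I) = exp (p.2 * I) ^ n * exp (p.2 * -I) ^ m := by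
      rw [← exp_nat_mul, ← exp_nat_mul, ← exp_add]
      congr 1
      push_cast
      ring
    rw [polarCoord_symm_eq_mul_exp, map_mul, conj_ofReal, ← exp_conj, map_mul, conj_I,
      conj_ofReal, real_smul, hexp]
    ring
  simp_rw [integral_norm_lt_eq_integral_polarCoord, hpolar]
  rw [Measure.volume_eq_prod, setIntegral_prod_mul (fun r : ℝ => (r : ℂ) ^ (n + m + 1))
    (fun θ : ℝ => exp (((n - m : ℤ) : ℂ) * θ * I)), integral_Ioo_ofReal_pow hR,
    ← integral_Ioc_eq_integral_Ioo, ← intervalIntegral.integral_of_le (by linarith [Real.pi_pos]),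
    integral_exp_int_mul_mul_I]
  simp only [sub_eq_zero, Nat.cast_inj]
  split_ifs with h
  · subst h
    have hn : (n : ℂ) + 1 ≠ 0 := by exact_mod_cast n.succ_ne_zero
    rw [show n + n + 1 + 1 = 2 * n + 2 by ring]
    push_cast
    rw [show (n : ℂ) + n + 1 + 1 = 2 * (n + 1) by ring]
    field_simp
  · rw [mul_zero]

theorem tsum_prod_eq_tsum_diag {α β : Type*} [AddCommMonoid α] [TopologicalSpace α]
    {f : β × β → α} (hf : ∀ p : β × β, p.1 ≠ p.2 → f p = 0) :
    ∑' p, f p = ∑' b, f (b, b) := by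
  refine (Function.Injective.tsum_eq (fun a b h => congrArg Prod.fst h) fun p hp => ?_).symm
  exact ⟨p.1, Prod.ext rfl (not_not.mp (mt (hf p) hp))⟩

theorem norm_sq_div_mul_conj_lt_one {R : ℝ} (hR : 0 ≤ R) {z w : ℂ} (hz : R < ‖z‖)
    (hw : R < ‖w‖) : ‖(R : ℂ) ^ 2 / (z * conj w)‖ < 1 := by
  rw [norm_div, norm_mul, RCLike.norm_conj, norm_pow, norm_real, Real.norm_of_nonneg hR,
    div_lt_one (mul_pos (hR.trans_lt hz) (hR.trans_lt hw))]
  nlinarith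

noncomputable def kernelSeriesTerm (z w : ℂ) (p : ℕ × ℕ) (ζ : ℂ) : ℂ :=
  ζ ^ p.1 / z ^ (p.1 + 1) * (conj ζ ^ p.2 / conj w ^ (p.2 + 1))

theorem hasSum_kernelSeriesTerm {z w ζ : ℂ} (hz : ‖ζ‖ < ‖z‖) (hw : ‖ζ‖ < ‖w‖) :
    HasSum (fun p => kernelSeriesTerm z w p ζ) (1 / ((ζ - z) * (conj ζ - conj w))) := by
  have h := hasSum_inv_sub_mul_inv_sub hz (x' := conj ζ) (y' := conj w) (by simpa using hw)
  rwa [← mul_inv, ← one_div, show (z - ζ) * (conj w - conj ζ) = (ζ - z) * (conj ζ - conj w) by ring]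
    at h

theorem norm_kernelSeriesTerm_le {R : ℝ} {z w ζ : ℂ} (hζ : ‖ζ‖ ≤ R) (p : ℕ × ℕ) :
    ‖kernelSeriesTerm z w p ζ‖ ≤ R ^ p.1 / ‖z‖ ^ (p.1 + 1) * (R ^ p.2 / ‖w‖ ^ (p.2 + 1)) := by
  have hR : 0 ≤ R := (norm_nonneg ζ).trans hζ
  simp only [kernelSeriesTerm, norm_mul, norm_div, norm_pow, RCLike.norm_conj]
  gcongr

theorem integral_norm_lt_kernelSeriesTerm {R : ℝ} (hR : 0 ≤ R) (z w : ℂ) (p : ℕ × ℕ) :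
    ∫ ζ in {ζ : ℂ | ‖ζ‖ < R}, kernelSeriesTerm z w p ζ =
      (if p.1 = p.2 then (π : ℂ) * R ^ (2 * p.1 + 2) / (p.1 + 1) else 0) /
        (z ^ (p.1 + 1) * conj w ^ (p.2 + 1)) := by
  simp only [kernelSeriesTerm, div_mul_div_comm]
  rw [integral_div, integral_norm_lt_pow_mul_conj_pow hR]

theorem integral_norm_lt_one_div_sub_mul_conj_sub {R : ℝ} (hR : 0 ≤ R) {z w : ℂ}
    (hz : R < ‖z‖) (hw : R < ‖w‖) :
    ∫ ζ in {ζ : ℂ | ‖ζ‖ < R}, 1 / ((ζ - z) * (conj ζ - conj w)) =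
      -(π * log (1 - (R : ℂ) ^ 2 / (z * conj w))) := by
  have hD : MeasurableSet {ζ : ℂ | ‖ζ‖ < R} := measurableSet_lt measurable_norm measurable_const
  have : IsFiniteMeasure (volume.restrict {ζ : ℂ | ‖ζ‖ < R}) := by
    rw [isFiniteMeasure_restrict, show {ζ : ℂ | ‖ζ‖ < R} = Metric.ball 0 R by ext; simp]
    exact measure_ball_lt_top.ne
  have hexpand : ∀ ζ ∈ {ζ : ℂ | ‖ζ‖ < R},
      1 / ((ζ - z) * (conj ζ - conj w)) = ∑' p, kernelSeriesTerm z w p ζ :=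
    fun ζ hζ => (hasSum_kernelSeriesTerm (hζ.trans hz) (hζ.trans hw)).tsum_eq.symm
  have hbound p : ∀ᵐ ζ ∂volume.restrict {ζ : ℂ | ‖ζ‖ < R},
      ‖kernelSeriesTerm z w p ζ‖ ≤ R ^ p.1 / ‖z‖ ^ (p.1 + 1) * (R ^ p.2 / ‖w‖ ^ (p.2 + 1)) :=
    ae_restrict_of_forall_mem hD fun ζ hζ => norm_kernelSeriesTerm_le (le_of_lt hζ) p
  -- The bounds form the same double geometric series, in `ℝ`, at `x = R`, `y = ‖z‖`, `‖w‖`.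
  have hsummable := (hasSum_inv_sub_mul_inv_sub (x := R) (y := ‖z‖) (x' := R) (y' := ‖w‖)
    (by simpa [abs_of_nonneg hR]) (by simpa [abs_of_nonneg hR] using hw)).summable
  have hlog := (hasSum_taylorSeries_neg_log' (norm_sq_div_mul_conj_lt_one hR hz hw)).mul_left
    (π : ℂ)
  rw [setIntegral_congr_fun hD hexpand,
    integral_tsum_of_norm_le (fun p => by unfold kernelSeriesTerm; fun_prop) hbound hsummable,
    tsum_congr (integral_norm_lt_kernelSeriesTerm hR z w),
    tsum_prod_eq_tsum_diag (fun p hp => by simp [hp]), ← mul_neg, ← hlog.tsum_eq]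
  refine tsum_congr fun n => ?_
  simp only [if_true]
  rw [div_pow, ← mul_pow, ← pow_mul]
  ring

/-- For the open unit disk `D`, the exponential kernel equals `1 - 1/(z·w̄)` for
`|z| > 1`, `|w| > 1`. -/
theorem expKernel_unitDisk (z w : ℂ) (hz : 1 < ‖z‖) (hw : 1 < ‖w‖) :
    Complex.exp (-(1 / (Real.pi : ℂ)) *
        ∫ ζ in {ζ : ℂ | ‖ζ‖ < 1},
          1 / ((ζ - z) * ((starRingEnd ℂ) ζ - (starRingEnd ℂ) w))) =
      1 - 1 / (z * (starRingEnd ℂ) w) := by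
  have hintegral := integral_norm_lt_one_div_sub_mul_conj_sub zero_le_one hz hw
  have hu := norm_sq_div_mul_conj_lt_one zero_le_one hz hw
  simp only [ofReal_one, one_pow] at hintegral hu
  have hne : 1 - 1 / (z * conj w) ≠ 0 := sub_ne_zero.mpr fun h => by simp [← h] at hu
  have hπ : (π : ℂ) ≠ 0 := ofReal_ne_zero.mpr Real.pi_ne_zero
  rw [hintegral, neg_mul_neg, one_div, inv_mul_cancel_left₀ hπ, exp_log hne]
end

section
/- Let T be a bounded operator with [T*,T] = ξ⊗ξ and set E(z,w̄) = 1 − ⟨(T*−w̄)^{-1}ξ, (T*−z̄)^{-1}ξ⟩ for z, w in the resolvent set. Then ⟨(T−z₁)^{-1}(T*−z̄₂)^{-1}ξ, (T−w₂)^{-1}(T*−w̄₁)^{-1}ξ⟩ = (E(z₁,w̄₂)E(w₁,z̄₂) − E(z₁,z̄₂)E(w₁,w̄₂)) / ((w₁−z₁)(w̄₂−z̄₂)E(z₁,w̄₂)), whenever w₁ ≠ z₁, w₂ ≠ z₂, E(z₁,w̄₂) ≠ 0, and all the resolvents exist. -/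
/-!
The self-commutator relation makes `(T* - w̄)⁻¹` and `(T - z)⁻¹` commute up to a rank-one term:
`(T* - w̄)⁻¹ (T - z)⁻¹ x = (T - z)⁻¹ (T* - w̄)⁻¹ x + α (T - z)⁻¹ (T* - w̄)⁻¹ ξ` with
`α = ⟨(T* - w̄)⁻¹ (T - z)⁻¹ x, ξ⟩`. For `x = (T* - z̄₂)⁻¹ ξ`, pairing this with `ξ` gives a linear
equation for `α` whose leading coefficient is `E(z₁, w̄₂)`. The first resolvent identity turns the
remaining products of two resolvents into differences of single ones, and every inner product
left over is `⟨(T - z)⁻¹ (T* - t̄)⁻¹ ξ, ξ⟩ = ⟨(T* - t̄)⁻¹ ξ, (T* - z̄)⁻¹ ξ⟩ = 1 - E(z, t̄)`.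
-/

open ContinuousLinearMap ComplexConjugate
open scoped Ring

theorem Ring.inverse_mul_inverse_sub_inverse_mul_inverse {R : Type*} [Ring R] {a b : R}
    (ha : IsUnit a) (hb : IsUnit b) :
    b⁻¹ʳ * a⁻¹ʳ - a⁻¹ʳ * b⁻¹ʳ = a⁻¹ʳ * b⁻¹ʳ * (b * a - a * b) * (b⁻¹ʳ * a⁻¹ʳ) := by
  have h := Ring.inverse_sub_inverse (iff_of_true (hb.mul ha) (ha.mul hb))
  rw [Ring.inverse_mul (.inl hb), Ring.inverse_mul (.inl ha)] at h
  rw [← neg_sub, h, ← neg_sub (b * a), mul_neg, neg_mul, neg_neg]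

section Algebra

variable {𝕜 A : Type*} [CommRing 𝕜] [Ring A] [Algebra 𝕜 A]

theorem inverse_sub_smul_one_sub_inverse_sub_smul_one (a : A) {z w : 𝕜}
    (hz : IsUnit (a - z • 1)) (hw : IsUnit (a - w • 1)) :
    (a - w • 1)⁻¹ʳ - (a - z • 1)⁻¹ʳ = (w - z) • ((a - w • 1)⁻¹ʳ * (a - z • 1)⁻¹ʳ) := by
  rw [Ring.inverse_sub_inverse (iff_of_true hw hz), sub_sub_sub_cancel_left, ← sub_smul,
    mul_smul_comm, mul_one, smul_mul_assoc]

theorem sub_smul_one_mul_sub_smul_one_sub (a b : A) (l m : 𝕜) :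
    (b - m • 1) * (a - l • 1) - (a - l • 1) * (b - m • 1) = b * a - a * b := by
  simp only [mul_sub, sub_mul, mul_one, one_mul, smul_mul_assoc, mul_smul_comm]
  module

end Algebra

theorem inverse_apply_inverse_apply_of_commutator_eq_smulRight {𝕜 E : Type*}
    [NontriviallyNormedField 𝕜] [NormedAddCommGroup E] [NormedSpace 𝕜 E] {a b : E →L[𝕜] E}
    {φ : E →L[𝕜] 𝕜} {ξ : E} (hab : b * a - a * b = φ.smulRight ξ) (ha : IsUnit a)
    (hb : IsUnit b) (x : E) :
    b⁻¹ʳ (a⁻¹ʳ x) = a⁻¹ʳ (b⁻¹ʳ x) + φ (b⁻¹ʳ (a⁻¹ʳ x)) • a⁻¹ʳ (b⁻¹ʳ ξ) := by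
  have h := DFunLike.congr_fun (Ring.inverse_mul_inverse_sub_inverse_mul_inverse ha hb) x
  simp only [hab, sub_apply, mul_apply_eq_comp, smulRight_apply, map_smul] at h
  rw [← h, add_sub_cancel]

section Resolvents

variable {H : Type*} [NormedAddCommGroup H] [InnerProductSpace ℂ H] [CompleteSpace H]
  (T : H →L[ℂ] H)

theorem adjoint_sub_smul_one (z : ℂ) : adjoint (T - z • 1) = adjoint T - conj z • 1 := by
  simp [← star_eq_adjoint, star_sub, star_smul]

theorem inverse_adjoint_sub_smul_one (z : ℂ) :
    (adjoint T - conj z • 1)⁻¹ʳ = adjoint (T - z • 1)⁻¹ʳ := by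
  rw [← adjoint_sub_smul_one, ← star_eq_adjoint, ← star_eq_adjoint, Ring.inverse_star]

theorem isUnit_sub_smul_one_of_isUnit_adjoint {z : ℂ} (h : IsUnit (adjoint T - conj z • 1)) :
    IsUnit (T - z • 1) := by
  rwa [← adjoint_sub_smul_one, ← star_eq_adjoint, isUnit_star] at h

theorem inner_inverse_adjoint_sub_smul_one_left (z : ℂ) (x y : H) :
    inner ℂ ((adjoint T - conj z • 1)⁻¹ʳ x) y = inner ℂ x ((T - z • 1)⁻¹ʳ y) := by
  rw [inverse_adjoint_sub_smul_one, adjoint_inner_left]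

theorem inner_inverse_sub_smul_one_left (z : ℂ) (x y : H) :
    inner ℂ ((T - z • 1)⁻¹ʳ x) y = inner ℂ x ((adjoint T - conj z • 1)⁻¹ʳ y) := by
  rw [inverse_adjoint_sub_smul_one, adjoint_inner_right]

variable (ξ : H)

/-- `detFun T ξ z w` is the `E(z, w̄)` of the statement. -/
noncomputable def detFun (z w : ℂ) : ℂ :=
  1 - inner ℂ ((adjoint T - conj z • 1)⁻¹ʳ ξ) ((adjoint T - conj w • 1)⁻¹ʳ ξ)

theorem inner_inverse_inverse_adjoint_eq_one_sub_detFun (z t : ℂ) :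
    inner ℂ ξ ((T - z • 1)⁻¹ʳ ((adjoint T - conj t • 1)⁻¹ʳ ξ)) = 1 - detFun T ξ z t := by
  rw [detFun, sub_sub_cancel, inner_inverse_adjoint_sub_smul_one_left]

theorem sub_mul_inner_eq_detFun_sub_detFun {z w : ℂ} (hz : IsUnit (T - z • 1))
    (hw : IsUnit (T - w • 1)) (t : ℂ) :
    (w - z) * inner ℂ ((adjoint T - conj w • 1)⁻¹ʳ ξ)
        ((T - z • 1)⁻¹ʳ ((adjoint T - conj t • 1)⁻¹ʳ ξ)) =
      detFun T ξ z t - detFun T ξ w t := by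
  have h := DFunLike.congr_fun (inverse_sub_smul_one_sub_inverse_sub_smul_one T hz hw)
    ((adjoint T - conj t • 1)⁻¹ʳ ξ)
  simp only [sub_apply, smul_apply, mul_apply_eq_comp] at h
  rw [inner_inverse_adjoint_sub_smul_one_left, ← inner_smul_right, ← h, inner_sub_right,
    inner_inverse_inverse_adjoint_eq_one_sub_detFun,
    inner_inverse_inverse_adjoint_eq_one_sub_detFun]
  ring

theorem smul_inverse_adjoint_inverse_inverse_adjoint_eq_sub
    (hcomm : adjoint T * T - T * adjoint T = (innerSL ℂ ξ).smulRight ξ) {z w t : ℂ}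
    (hz : IsUnit (T - z • 1)) (hw : IsUnit (adjoint T - conj w • 1))
    (ht : IsUnit (adjoint T - conj t • 1)) :
    ((conj w - conj t) * detFun T ξ z w) •
        (adjoint T - conj w • 1)⁻¹ʳ ((T - z • 1)⁻¹ʳ ((adjoint T - conj t • 1)⁻¹ʳ ξ)) =
      detFun T ξ z t • (T - z • 1)⁻¹ʳ ((adjoint T - conj w • 1)⁻¹ʳ ξ) -
        detFun T ξ z w • (T - z • 1)⁻¹ʳ ((adjoint T - conj t • 1)⁻¹ʳ ξ) := by
  have hswap := inverse_apply_inverse_apply_of_commutator_eq_smulRight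
    (by rw [sub_smul_one_mul_sub_smul_one_sub, hcomm]) hz hw ((adjoint T - conj t • 1)⁻¹ʳ ξ)
  rw [innerSL_apply_apply] at hswap
  have hres := DFunLike.congr_fun
    (inverse_sub_smul_one_sub_inverse_sub_smul_one (adjoint T) ht hw) ξ
  simp only [sub_apply, smul_apply, mul_apply_eq_comp] at hres
  have hpair := congrArg (inner ℂ ξ) hswap
  rw [inner_add_right, inner_smul_right, inner_inverse_inverse_adjoint_eq_one_sub_detFun] at hpair
  set Rz := (T - z • 1)⁻¹ʳ
  set Rw := (adjoint T - conj w • 1)⁻¹ʳ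
  set Rt := (adjoint T - conj t • 1)⁻¹ʳ
  set α := inner ℂ ξ (Rw (Rz (Rt ξ)))
  have hsplit : (conj w - conj t) * inner ℂ ξ (Rz (Rw (Rt ξ))) =
      detFun T ξ z t - detFun T ξ z w := by
    rw [← inner_smul_right, ← map_smul, ← hres, map_sub, inner_sub_right,
      inner_inverse_inverse_adjoint_eq_one_sub_detFun,
      inner_inverse_inverse_adjoint_eq_one_sub_detFun]
    ring
  have hα : (conj w - conj t) * α * detFun T ξ z w = detFun T ξ z t - detFun T ξ z w := by
    linear_combination (conj w - conj t) * hpair + hsplit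
  have hRz := congrArg Rz hres
  rw [map_smul, map_sub] at hRz
  rw [hswap]
  linear_combination (norm := module) detFun T ξ z w • hRz.symm + hα • Rz (Rw ξ)

end Resolvents

theorem determinantal_identity_general {H : Type*} [NormedAddCommGroup H]
    [InnerProductSpace ℂ H] [CompleteSpace H] (T : H →L[ℂ] H) (ξ : H)
    (hcomm : adjoint T * T - T * adjoint T = (innerSL ℂ ξ).smulRight ξ)
    (E : ℂ → ℂ → ℂ)
    (hE : ∀ z w : ℂ, E z w = 1 -
      (inner ℂ (Ring.inverse (adjoint T - (starRingEnd ℂ z) • (1 : H →L[ℂ] H)) ξ)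
             (Ring.inverse (adjoint T - (starRingEnd ℂ w) • (1 : H →L[ℂ] H)) ξ) : ℂ))
    (z₁ z₂ w₁ w₂ : ℂ)
    (hz₁ : IsUnit (T - z₁ • (1 : H →L[ℂ] H)))
    (hz₂' : IsUnit (adjoint T - (starRingEnd ℂ z₂) • (1 : H →L[ℂ] H)))
    (hw₁' : IsUnit (adjoint T - (starRingEnd ℂ w₁) • (1 : H →L[ℂ] H)))
    (hw₂' : IsUnit (adjoint T - (starRingEnd ℂ w₂) • (1 : H →L[ℂ] H)))
    (hne₁ : w₁ ≠ z₁) (hne₂ : w₂ ≠ z₂) (hEne : E z₁ w₂ ≠ 0) :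
    (inner ℂ ((Ring.inverse (T - w₂ • (1 : H →L[ℂ] H)) *
              Ring.inverse (adjoint T - (starRingEnd ℂ w₁) • (1 : H →L[ℂ] H))) ξ)
           ((Ring.inverse (T - z₁ • (1 : H →L[ℂ] H)) *
              Ring.inverse (adjoint T - (starRingEnd ℂ z₂) • (1 : H →L[ℂ] H))) ξ) : ℂ) =
      (E z₁ w₂ * E w₁ z₂ - E z₁ z₂ * E w₁ w₂) /
        ((w₁ - z₁) * ((starRingEnd ℂ) w₂ - (starRingEnd ℂ) z₂) * E z₁ w₂) := by
  obtain rfl : E = detFun T ξ := funext₂ hE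
  have hw₁ := isUnit_sub_smul_one_of_isUnit_adjoint T hw₁'
  have hconj : conj w₂ - conj z₂ ≠ 0 := sub_ne_zero.2 ((starRingEnd ℂ).injective.ne hne₂)
  have hvec := congrArg (inner ℂ ((adjoint T - conj w₁ • 1)⁻¹ʳ ξ))
    (smul_inverse_adjoint_inverse_inverse_adjoint_eq_sub T ξ hcomm hz₁ hw₂' hz₂')
  rw [inner_smul_right, inner_sub_right, inner_smul_right, inner_smul_right] at hvec
  have hw := sub_mul_inner_eq_detFun_sub_detFun T ξ hz₁ hw₁ w₂
  have hz := sub_mul_inner_eq_detFun_sub_detFun T ξ hz₁ hw₁ z₂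
  rw [eq_div_iff (mul_ne_zero (mul_ne_zero (sub_ne_zero.2 hne₁) hconj) hEne), mul_apply_eq_comp,
    mul_apply_eq_comp, inner_inverse_sub_smul_one_left]
  linear_combination (w₁ - z₁) * hvec + detFun T ξ z₁ z₂ * hw - detFun T ξ z₁ w₂ * hz

/-- Determinantal-function identity: for `[T*,T] = ξ⊗ξ` and
`E(z,w̄) = 1 − ⟨(T*−w̄)⁻¹ξ, (T*−z̄)⁻¹ξ⟩`,
`⟨(T−z₁)⁻¹(T*−z̄₂)⁻¹ξ, (T−w₂)⁻¹(T*−w̄₁)⁻¹ξ⟩ =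
 (E(z₁,w̄₂)E(w₁,z̄₂) − E(z₁,z̄₂)E(w₁,w̄₂)) / ((w₁−z₁)(w̄₂−z̄₂)E(z₁,w̄₂))`.
(Here `⟨x, y⟩` denotes the inner product linear in `x`, i.e. `inner y x` in Mathlib.) -/
theorem determinantal_identity {H : Type*} [NormedAddCommGroup H]
    [InnerProductSpace ℂ H] [CompleteSpace H] (T : H →L[ℂ] H) (ξ : H)
    (hcomm : adjoint T * T - T * adjoint T = (innerSL ℂ ξ).smulRight ξ)
    (E : ℂ → ℂ → ℂ)
    (hE : ∀ z w : ℂ, E z w = 1 -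
      (inner ℂ (Ring.inverse (adjoint T - (starRingEnd ℂ z) • (1 : H →L[ℂ] H)) ξ)
             (Ring.inverse (adjoint T - (starRingEnd ℂ w) • (1 : H →L[ℂ] H)) ξ) : ℂ))
    (z₁ z₂ w₁ w₂ : ℂ)
    (hz₁ : IsUnit (T - z₁ • (1 : H →L[ℂ] H)))
    (hw₂ : IsUnit (T - w₂ • (1 : H →L[ℂ] H)))
    (hz₁' : IsUnit (adjoint T - (starRingEnd ℂ z₁) • (1 : H →L[ℂ] H)))
    (hz₂' : IsUnit (adjoint T - (starRingEnd ℂ z₂) • (1 : H →L[ℂ] H)))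
    (hw₁' : IsUnit (adjoint T - (starRingEnd ℂ w₁) • (1 : H →L[ℂ] H)))
    (hw₂' : IsUnit (adjoint T - (starRingEnd ℂ w₂) • (1 : H →L[ℂ] H)))
    (hne₁ : w₁ ≠ z₁) (hne₂ : w₂ ≠ z₂) (hEne : E z₁ w₂ ≠ 0) :
    (inner ℂ ((Ring.inverse (T - w₂ • (1 : H →L[ℂ] H)) *
              Ring.inverse (adjoint T - (starRingEnd ℂ w₁) • (1 : H →L[ℂ] H))) ξ)
           ((Ring.inverse (T - z₁ • (1 : H →L[ℂ] H)) *
              Ring.inverse (adjoint T - (starRingEnd ℂ z₂) • (1 : H →L[ℂ] H))) ξ) : ℂ) =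
      (E z₁ w₂ * E w₁ z₂ - E z₁ z₂ * E w₁ w₂) /
        ((w₁ - z₁) * ((starRingEnd ℂ) w₂ - (starRingEnd ℂ) z₂) * E z₁ w₂) :=
  determinantal_identity_general T ξ hcomm E hE z₁ z₂ w₁ w₂ hz₁ hz₂' hw₁' hw₂' hne₁ hne₂ hEne
end
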